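/- arXiv:math/9801090 — 2 statements merged into one kernel-verified Lean document; each statement's English description precedes it below -/
import Mathlib

section
/- Let U be a finite-dimensional space of smooth real functions on a planar domain D with dim U = m ≥ 1, and let x₀ ∈ D. Then there exists a nonzero u ∈ U all of whose derivatives of order < ⌊m/2⌋ vanish at x₀. -/
noncomputable def Dop (w : ℝ × ℝ) (f : ℝ × ℝ → ℝ) : ℝ × ℝ → ℝ := fun x => fderiv ℝ f x w

lemma Dop_smooth {f : ℝ × ℝ → ℝ} (hf : ContDiff ℝ (⊤ : ℕ∞) f) (w : ℝ × ℝ) :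
    ContDiff ℝ (⊤ : ℕ∞) (Dop w f) := by
  have h1 : ContDiff ℝ (⊤ : ℕ∞) (fderiv ℝ f) := hf.fderiv_right (by simp)
  exact h1.clm_apply contDiff_const

noncomputable def DR : List (ℝ × ℝ) → (ℝ × ℝ → ℝ) → (ℝ × ℝ → ℝ)
  | [], f => f
  | w :: t, f => Dop w (DR t f)

lemma DR_smooth {f : ℝ × ℝ → ℝ} (hf : ContDiff ℝ (⊤ : ℕ∞) f) :
    ∀ L : List (ℝ × ℝ), ContDiff ℝ (⊤ : ℕ∞) (DR L f)
  | [] => hf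
  | w :: t => Dop_smooth (DR_smooth hf t) w

lemma DR_append_singleton (L : List (ℝ × ℝ)) (w : ℝ × ℝ) (f : ℝ × ℝ → ℝ) :
    DR (L ++ [w]) f = DR L (Dop w f) := by
  induction L with
  | nil => rfl
  | cons a t ih => simp [DR, ih]

lemma itfd_eq_DR (n : ℕ) : ∀ (f : ℝ × ℝ → ℝ), ContDiff ℝ (⊤ : ℕ∞) f →
    ∀ (x : ℝ × ℝ) (v : Fin n → ℝ × ℝ),
    iteratedFDeriv ℝ n f x v = DR (List.ofFn v) f x := by
  induction n with
  | zero => intro f hf x v; simp [DR, iteratedFDeriv_zero_apply]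
  | succ n ih =>
    intro f hf x v
    rw [iteratedFDeriv_succ_apply_right]
    have hd : ContDiff ℝ (⊤ : ℕ∞) (fderiv ℝ f) := hf.fderiv_right (by simp)
    have key : iteratedFDeriv ℝ n (fun y => fderiv ℝ f y) x (Fin.init v) (v (Fin.last n))
        = iteratedFDeriv ℝ n (Dop (v (Fin.last n)) f) x (Fin.init v) := by
      have := (ContinuousLinearMap.apply ℝ ℝ (v (Fin.last n))).iteratedFDeriv_comp_left
        (hd.contDiffAt (x := x)) (i := n) (by exact_mod_cast le_top)
      have h2 : (ContinuousLinearMap.apply ℝ ℝ (v (Fin.last n))) ∘ (fderiv ℝ f)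
          = Dop (v (Fin.last n)) f := rfl
      rw [h2] at this
      rw [this]
      rfl
    rw [key, ih _ (Dop_smooth hf _) x (Fin.init v), List.ofFn_succ',
      List.concat_eq_append, DR_append_singleton]
    rfl

lemma Dop_comm {f : ℝ × ℝ → ℝ} (hf : ContDiff ℝ (⊤ : ℕ∞) f) (a b : ℝ × ℝ) :
    Dop a (Dop b f) = Dop b (Dop a f) := by
  have hd : ContDiff ℝ (⊤ : ℕ∞) (fderiv ℝ f) := hf.fderiv_right (by simp)
  have hdiff : ∀ y, HasFDerivAt f (fderiv ℝ f y) y := fun y =>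
    (hf.differentiable (by simp) y).hasFDerivAt
  funext x
  have hd2 : ∀ w : ℝ × ℝ, Dop w (Dop w f) = Dop w (Dop w f) := fun _ => rfl
  have hsnd : HasFDerivAt (fderiv ℝ f) (fderiv ℝ (fderiv ℝ f) x) x :=
    (hd.differentiable (by simp) x).hasFDerivAt
  have hsym := second_derivative_symmetric hdiff hsnd a b
  have key : ∀ w z : ℝ × ℝ, Dop w (Dop z f) x = fderiv ℝ (fderiv ℝ f) x w z := by
    intro w z
    have h1 : Dop z f = fun y => (ContinuousLinearMap.apply ℝ ℝ z) (fderiv ℝ f y) := rfl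
    have h2 : fderiv ℝ (Dop z f) x
        = (ContinuousLinearMap.apply ℝ ℝ z).comp (fderiv ℝ (fderiv ℝ f) x) := by
      rw [h1]
      have := fderiv_comp (𝕜 := ℝ)
        (f := fderiv ℝ f) (g := (ContinuousLinearMap.apply ℝ ℝ z))
        (x := x) (ContinuousLinearMap.differentiableAt _) (hd.differentiable (by simp) x)
      rw [Function.comp_def] at this
      rw [this, ContinuousLinearMap.fderiv]
    show fderiv ℝ (Dop z f) x w = _
    rw [h2]
    rfl
  rw [key a b, key b a, hsym]

lemma DR_perm {L₁ L₂ : List (ℝ × ℝ)} (h : L₁.Perm L₂) :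
    ∀ f : ℝ × ℝ → ℝ, ContDiff ℝ (⊤ : ℕ∞) f → DR L₁ f = DR L₂ f := by
  induction h with
  | nil => intro f hf; rfl
  | cons x h ih => intro f hf; show Dop x (DR _ f) = Dop x (DR _ f); rw [ih f hf]
  | swap x y l =>
    intro f hf
    show Dop y (Dop x (DR l f)) = Dop x (Dop y (DR l f))
    rw [Dop_comm (DR_smooth hf l)]
  | trans h₁ h₂ ih₁ ih₂ => intro f hf; rw [ih₁ f hf, ih₂ f hf]

lemma sort_lemma (E1 E2 : ℝ × ℝ) :
    ∀ L : List (ℝ × ℝ), (∀ x ∈ L, x = E1 ∨ x = E2) →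
    ∃ j ≤ L.length, L.Perm (List.replicate j E1 ++ List.replicate (L.length - j) E2) ∧
      ∀ y1 y2 : ℝ, (L.map (fun w => if w = E1 then y1 else y2)).prod
        = y1 ^ j * y2 ^ (L.length - j) := by
  intro L
  induction L with
  | nil => intro _; exact ⟨0, le_refl 0, by simp, by simp⟩
  | cons w t ih =>
    intro hmem
    obtain ⟨j, hj, hperm, hprod⟩ := ih (fun x hx => hmem x (List.mem_cons_of_mem w hx))
    rcases hmem w (List.mem_cons_self) with hw | hw
    · refine ⟨j + 1, by simpa using Nat.succ_le_succ hj, ?_, ?_⟩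
      · have : (w :: t).length - (j+1) = t.length - j := by simp [Nat.succ_sub_succ]
        rw [this, hw]
        simpa [List.replicate_succ] using hperm.cons E1
      · intro y1 y2
        simp only [List.map_cons, List.prod_cons, hprod, hw, if_pos rfl, eq_self_iff_true, if_true,
          List.length_cons, Nat.succ_sub_succ]
        ring
    · by_cases hww : w = E1
      · refine ⟨j + 1, by simpa using Nat.succ_le_succ hj, ?_, ?_⟩
        · have : (w :: t).length - (j+1) = t.length - j := by simp [Nat.succ_sub_succ]
          rw [this, hww]
          simpa [List.replicate_succ] using hperm.cons E1
        · intro y1 y2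
          simp only [List.map_cons, List.prod_cons, hprod, hww, if_pos rfl, eq_self_iff_true, if_true,
            List.length_cons, Nat.succ_sub_succ]
          ring
      · refine ⟨j, le_trans hj (by simp), ?_, ?_⟩
        · have hlen : (w :: t).length - j = (t.length - j) + 1 := by
            simp [Nat.succ_sub hj]
          rw [hlen, hw]
          rw [List.replicate_succ]
          exact (hperm.cons E2).trans List.perm_middle.symm
        · intro y1 y2
          simp only [List.map_cons, List.prod_cons, hprod, if_neg hww,
            List.length_cons, Nat.succ_sub hj, pow_succ]
          ring

open Polynomial in
lemma diag_zero_imp_zero {n : ℕ} {u : ℝ × ℝ → ℝ} (hu : ContDiff ℝ (⊤ : ℕ∞) u) (x₀ : ℝ × ℝ)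
    (hdiag : ∀ y : ℝ × ℝ, iteratedFDeriv ℝ n u x₀ (fun _ => y) = 0) :
    iteratedFDeriv ℝ n u x₀ = 0 := by
  classical
  set E1 : ℝ × ℝ := (1, 0) with hE1
  set E2 : ℝ × ℝ := (0, 1) with hE2
  have hne : E1 ≠ E2 := by simp [hE1, hE2, Prod.ext_iff]
  set f := iteratedFDeriv ℝ n u x₀ with hf
  set pat : (Fin n → Fin 2) → (Fin n → ℝ × ℝ) :=
    fun r i => if r i = 0 then E1 else E2 with hpat
  have hmem : ∀ r : Fin n → Fin 2, ∀ x ∈ List.ofFn (pat r), x = E1 ∨ x = E2 := by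
    intro r x hx
    rw [List.mem_ofFn] at hx
    obtain ⟨i, rfl⟩ := hx
    by_cases h : r i = 0 <;> simp [hpat, h]
  have H : ∀ r : Fin n → Fin 2, ∃ j, j ≤ n ∧
      (List.ofFn (pat r)).Perm (List.replicate j E1 ++ List.replicate (n - j) E2) ∧
      ∀ y1 y2 : ℝ, ((List.ofFn (pat r)).map (fun w => if w = E1 then y1 else y2)).prod
        = y1 ^ j * y2 ^ (n - j) := by
    intro r
    obtain ⟨j, hj, hp, hq⟩ := sort_lemma E1 E2 (List.ofFn (pat r)) (hmem r)
    rw [List.length_ofFn] at hj hp hq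
    exact ⟨j, hj, hp, hq⟩
  choose j hjle hjperm hjprod using H
  -- the canonical values
  set c : ℕ → ℝ := fun k => DR (List.replicate k E1 ++ List.replicate (n - k) E2) u x₀ with hc
  have key1 : ∀ r, f (pat r) = c (j r) := by
    intro r
    rw [hf, itfd_eq_DR n u hu x₀ (pat r), DR_perm (hjperm r) u hu]
  -- product formula
  have prod_eq : ∀ (r : Fin n → Fin 2) (y1 y2 : ℝ),
      (∏ i, if r i = 0 then y1 else y2) = y1 ^ (j r) * y2 ^ (n - j r) := by
    intro r y1 y2
    have := hjprod r y1 y2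
    rw [List.map_ofFn, List.prod_ofFn] at this
    rw [← this]
    apply Finset.prod_congr rfl
    intro i _
    by_cases h : r i = 0 <;> simp [Function.comp, hpat, h, hne, hne.symm]
  -- multilinear expansion
  have expand : ∀ v : Fin n → ℝ × ℝ,
      f v = ∑ r : Fin n → Fin 2, (∏ i, if r i = 0 then (v i).1 else (v i).2) • f (pat r) := by
    intro v
    set g : ∀ i : Fin n, Fin 2 → ℝ × ℝ :=
      fun i s => if s = 0 then (v i).1 • E1 else (v i).2 • E2 with hg
    have hv : v = fun i => ∑ s : Fin 2, g i s := by
      funext i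
      simp [hg, Fin.sum_univ_two, hE1, hE2, Prod.ext_iff]
    have h1 : f v = ∑ r : Fin n → Fin 2, f (fun i => g i (r i)) := by
      conv_lhs => rw [hv]
      exact f.toMultilinearMap.map_sum (fun i s => g i s)
    rw [h1]
    apply Finset.sum_congr rfl
    intro r _
    have : (fun i => g i (r i))
        = fun i => (if r i = 0 then (v i).1 else (v i).2) • pat r i := by
      funext i
      by_cases h : r i = 0 <;> simp [hg, hpat, h]
    rw [this]
    exact f.map_smul_univ _ _
  -- polynomial vanishing
  have hdiag2 : ∀ y1 y2 : ℝ,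
      (∑ r : Fin n → Fin 2, y1 ^ (j r) * y2 ^ (n - j r) * c (j r)) = 0 := by
    intro y1 y2
    have := hdiag (y1, y2)
    rw [expand (fun _ => (y1, y2))] at this
    rw [← this]
    apply Finset.sum_congr rfl
    intro r _
    rw [key1 r, prod_eq r, smul_eq_mul]
  have hc0 : ∀ k ≤ n, c k = 0 := by
    intro k hk
    -- build the polynomial
    set p : ℝ[X] := ∑ r : Fin n → Fin 2, C (c (j r)) * X ^ (j r) with hp
    have hpeval : ∀ t : ℝ, p.eval t = 0 := by
      intro t
      rw [hp]
      simp only [eval_finset_sum, eval_mul, eval_C, eval_pow, eval_X]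
      have := hdiag2 t 1
      simpa [mul_comm] using this
    have hp0 : p = 0 := Polynomial.funext (fun t => by rw [hpeval t]; simp)
    have hcoeff : p.coeff k = ∑ r : Fin n → Fin 2, if k = j r then c (j r) else 0 := by
      rw [hp, Polynomial.finset_sum_coeff]
      apply Finset.sum_congr rfl
      intro r _
      rw [Polynomial.coeff_C_mul_X_pow]
    -- find r₀ with j r₀ = k
    have hr0 : ∃ r : Fin n → Fin 2, j r = k := by
      refine ⟨fun i => if (i : ℕ) < k then 0 else 1, ?_⟩
      set r₀ : Fin n → Fin 2 := fun i => if (i : ℕ) < k then 0 else 1 with hr₀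
      have h1 := prod_eq r₀ 2 1
      have h2 : (∏ i, if r₀ i = 0 then (2:ℝ) else 1) = 2 ^ k := by
        have : ∀ i : Fin n, (if r₀ i = 0 then (2:ℝ) else 1)
            = (if (i : ℕ) < k then (2:ℝ) else 1) := by
          intro i
          by_cases h : (i : ℕ) < k <;> simp [hr₀, h]
        have ha : ∏ i ∈ Finset.range k, (if i < k then (2:ℝ) else 1) = 2 ^ k := by
          rw [Finset.prod_congr rfl (fun i hi => if_pos (Finset.mem_range.1 hi)),
            Finset.prod_const, Finset.card_range]
        have hb : ∏ i ∈ Finset.Ico k n, (if i < k then (2:ℝ) else 1) = 1 := by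
          rw [Finset.prod_congr rfl
            (fun i hi => if_neg (not_lt.2 (Finset.mem_Ico.1 hi).1)), Finset.prod_const_one]
        have h3 : (∏ i : Fin n, if (i : ℕ) < k then (2:ℝ) else 1) = 2 ^ k := by
          rw [Fin.prod_univ_eq_prod_range (fun m => if m < k then (2:ℝ) else 1) n,
            ← Finset.prod_range_mul_prod_Ico _ hk, ha, hb, mul_one]
        rw [Finset.prod_congr rfl (fun i _ => this i), h3]
      rw [h2, one_pow, mul_one] at h1
      exact (pow_right_strictMono₀ (one_lt_two (α := ℝ))).injective h1.symm
    obtain ⟨r₀, hr₀k⟩ := hr0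
    have hfilter : r₀ ∈ Finset.univ.filter (fun r => k = j r) := by
      simp [hr₀k]
    have hcard : (Finset.univ.filter (fun r : Fin n → Fin 2 => k = j r)).card ≠ 0 := by
      intro hzero
      rw [Finset.card_eq_zero] at hzero
      rw [hzero] at hfilter
      exact absurd hfilter (Finset.notMem_empty r₀)
    have h0 : (0:ℝ) = ((Finset.univ.filter (fun r : Fin n → Fin 2 => k = j r)).card : ℝ) * c k := by
      have := hcoeff
      rw [hp0, Polynomial.coeff_zero] at this
      rw [this]
      rw [show (∑ r : Fin n → Fin 2, if k = j r then c (j r) else 0)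
          = ∑ r : Fin n → Fin 2, if k = j r then c k else 0 from
        Finset.sum_congr rfl (fun r _ => by by_cases h : k = j r <;> simp [h])]
      rw [← Finset.sum_filter, Finset.sum_const, nsmul_eq_mul]
    have := h0
    rw [eq_comm, mul_eq_zero, Nat.cast_eq_zero, Finset.card_eq_zero] at this
    rcases this with h | h
    · exact absurd (Finset.card_eq_zero.2 h) hcard
    · exact h
  -- conclude
  have : f = 0 := by
    ext v
    rw [expand v]
    apply Finset.sum_eq_zero
    intro r _
    rw [key1 r, hc0 (j r) (hjle r), smul_zero]
  exact this


lemma Y2_pow (l : ℕ) (hl : 1 ≤ l) :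
    (((Real.cos (Real.pi / (2 * l)) : ℝ) : ℂ)
      + ((Real.sin (Real.pi / (2 * l)) : ℝ) : ℂ) * Complex.I) ^ l = Complex.I := by
  rw [Complex.ofReal_cos, Complex.ofReal_sin, ← Complex.exp_mul_I, ← Complex.exp_nat_mul]
  have hl0 : (l : ℂ) ≠ 0 := Nat.cast_ne_zero.2 (by omega)
  have harg : (l : ℂ) * (((Real.pi / (2 * l) : ℝ) : ℂ) * Complex.I)
      = ((Real.pi / 2 : ℝ) : ℂ) * Complex.I := by
    push_cast
    field_simp
  rw [harg, Complex.exp_mul_I]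
  push_cast
  have hc : Complex.cos (↑Real.pi / 2) = 0 := by
    rw [show ((Real.pi : ℂ) / 2) = ((Real.pi / 2 : ℝ) : ℂ) by push_cast; ring,
      ← Complex.ofReal_cos, Real.cos_pi_div_two, Complex.ofReal_zero]
  have hs : Complex.sin (↑Real.pi / 2) = 1 := by
    rw [show ((Real.pi : ℂ) / 2) = ((Real.pi / 2 : ℝ) : ℂ) by push_cast; ring,
      ← Complex.ofReal_sin, Real.sin_pi_div_two, Complex.ofReal_one]
  rw [hc, hs, one_mul, zero_add]

/-- Let `U` be an `m`-dimensional space (`m ≥ 1`) of smooth real functions on a planar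
domain `D`, such that at `x₀` the lowest-order nonvanishing Taylor term of each
`u ∈ U` is a harmonic homogeneous polynomial (as holds for Laplace eigenfunctions).
Then some nonzero `u ∈ U` has all derivatives of order `< ⌊m/2⌋` vanishing at `x₀`. -/
theorem exists_eigenfunction_vanishing_high_order
    (D : Set (ℝ × ℝ)) (hD : IsOpen D)
    (U : Submodule ℝ ((ℝ × ℝ) → ℝ)) (m : ℕ) (hm : 1 ≤ m)
    (hdim : Module.finrank ℝ ↥U = m)
    (hsmooth : ∀ u ∈ U, ContDiff ℝ (⊤ : ℕ∞) u)
    (x₀ : ℝ × ℝ) (hx₀ : x₀ ∈ D)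
    (hharm : ∀ u ∈ U, ∀ n : ℕ, 1 ≤ n →
      (∀ l < n, iteratedFDeriv ℝ l u x₀ = 0) → iteratedFDeriv ℝ n u x₀ ≠ 0 →
      ∃ a b : ℝ, ∀ y : ℝ × ℝ,
        iteratedFDeriv ℝ n u x₀ (fun _ => y)
          = a * (((y.1 : ℂ) + (y.2 : ℂ) * Complex.I) ^ n).re
            + b * (((y.1 : ℂ) + (y.2 : ℂ) * Complex.I) ^ n).im) :
    ∃ u ∈ U, u ≠ 0 ∧ ∀ l < m / 2, iteratedFDeriv ℝ l u x₀ = 0 := by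
  classical
  set k := m / 2 with hk
  by_cases hk0 : k = 0
  · -- trivial case: just need a nonzero element
    have hpos : 0 < Module.finrank ℝ ↥U := by omega
    obtain ⟨u, hu, hune⟩ := (Submodule.ne_bot_iff U).1
      (by intro hbot; rw [hbot] at hdim; simp at hdim; omega)
    exact ⟨u, hu, hune, by intro l hl; omega⟩
  · have hk1 : 1 ≤ k := by omega
    have h2k : 2 * k ≤ m := by omega
    set Y1 : ℝ × ℝ := (1, 0) with hY1
    set Y2 : ℕ → ℝ × ℝ :=
      fun l => (Real.cos (Real.pi / (2 * l)), Real.sin (Real.pi / (2 * l))) with hY2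
    -- linear functionals
    set T : ℕ → (ℝ × ℝ) → ↥U → ℝ :=
      fun l y u => iteratedFDeriv ℝ l (u : (ℝ × ℝ) → ℝ) x₀ (fun _ => y) with hT
    have Tadd : ∀ (l : ℕ) (y : ℝ × ℝ) (u v : ↥U), T l y (u + v) = T l y u + T l y v := by
      intro l y u v
      have h1 : ((u + v : ↥U) : (ℝ × ℝ) → ℝ) = (u : (ℝ × ℝ) → ℝ) + v := rfl
      simp only [hT, h1]
      rw [iteratedFDeriv_add_apply ((hsmooth _ u.2).of_le (by exact_mod_cast le_top)).contDiffAt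
        ((hsmooth _ v.2).of_le (by exact_mod_cast le_top)).contDiffAt]
      rfl
    have Tsmul : ∀ (l : ℕ) (y : ℝ × ℝ) (a : ℝ) (u : ↥U), T l y (a • u) = a * T l y u := by
      intro l y a u
      have h1 : ((a • u : ↥U) : (ℝ × ℝ) → ℝ) = a • (u : (ℝ × ℝ) → ℝ) := rfl
      simp only [hT, h1]
      rw [iteratedFDeriv_const_smul_apply ((hsmooth _ u.2).of_le (by exact_mod_cast le_top)).contDiffAt]
      rfl
    set Φ : ↥U →ₗ[ℝ] ℝ × (Fin (k - 1) → ℝ × ℝ) :=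
      { toFun := fun u => (T 0 Y1 u,
          fun i => (T (i + 1) Y1 u, T (i + 1) (Y2 (i + 1)) u))
        map_add' := by
          intro u v
          refine Prod.ext (by simp [Tadd]) (funext fun i => Prod.ext ?_ ?_) <;>
            simp [Tadd]
        map_smul' := by
          intro a u
          refine Prod.ext (by simp [Tsmul]) (funext fun i => Prod.ext ?_ ?_) <;>
            simp [Tsmul] } with hΦ
    have hcod : Module.finrank ℝ (ℝ × (Fin (k - 1) → ℝ × ℝ)) = 2 * k - 1 := by
      have h2 : Module.finrank ℝ (ℝ × ℝ) = 2 := by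
        simp [Module.finrank_prod]
      rw [Module.finrank_prod, Module.finrank_pi_fintype]
      simp only [h2, Finset.sum_const, Finset.card_univ, Fintype.card_fin, smul_eq_mul,
        Module.finrank_self]
      omega
    have hninj : ¬ Function.Injective Φ := by
      intro hinj
      have := LinearMap.finrank_le_finrank_of_injective hinj
      rw [hdim, hcod] at this
      omega
    have hker : LinearMap.ker Φ ≠ ⊥ := fun h => hninj (LinearMap.ker_eq_bot.1 h)
    obtain ⟨x, hxker, hxne⟩ := (Submodule.ne_bot_iff _).1 hker
    refine ⟨(x : (ℝ × ℝ) → ℝ), x.2, by simpa using hxne, ?_⟩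
    -- components of Φ x = 0
    have hx0 : (x : (ℝ × ℝ) → ℝ) x₀ = 0 := by
      have := congrArg Prod.fst (LinearMap.mem_ker.1 hxker)
      simpa [hΦ, hT, iteratedFDeriv_zero_apply] using this
    have hxcomp : ∀ i : Fin (k - 1),
        T (i + 1) Y1 x = 0 ∧ T (i + 1) (Y2 (i + 1)) x = 0 := by
      intro i
      have h2 := congrArg Prod.snd (LinearMap.mem_ker.1 hxker)
      have h3 := congrArg (fun g => g i) h2
      exact ⟨congrArg Prod.fst h3, congrArg Prod.snd h3⟩
    have hsm : ContDiff ℝ (⊤ : ℕ∞) (x : (ℝ × ℝ) → ℝ) := hsmooth _ x.2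
    intro l hl
    induction l using Nat.strong_induction_on with
    | _ l ih =>
      rcases Nat.eq_zero_or_pos l with hl0 | hpos
      · subst hl0
        ext v
        rw [iteratedFDeriv_zero_apply]
        simpa using hx0
      · by_contra hne
        obtain ⟨a, b, hab⟩ := hharm _ x.2 l hpos
          (fun l' hl' => ih l' hl' (by omega)) hne
        have hik : l - 1 < k - 1 := by omega
        set i : Fin (k - 1) := ⟨l - 1, hik⟩ with hi
        have hil : (i : ℕ) + 1 = l := by simp [hi]; omega
        obtain ⟨h1, h2⟩ := hxcomp i
        rw [hil] at h1 h2
        have e1 : (((Y1.1 : ℝ) : ℂ) + ((Y1.2 : ℝ) : ℂ) * Complex.I) ^ l = 1 := by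
          simp [hY1]
        have e2 : (((Y2 l).1 : ℂ) + ((Y2 l).2 : ℂ) * Complex.I) ^ l = Complex.I := by
          simp only [hY2]
          exact Y2_pow l hpos
        have ha : a = 0 := by
          have h4 := hab Y1
          rw [e1] at h4
          simp only [Complex.one_re, Complex.one_im, mul_one, mul_zero, add_zero] at h4
          simp only [hT] at h1
          rw [h1] at h4
          exact h4.symm
        have hb : b = 0 := by
          have h4 := hab (Y2 l)
          rw [e2] at h4
          simp only [Complex.I_re, Complex.I_im, mul_one, mul_zero, zero_add] at h4
          simp only [hT] at h2
          rw [h2] at h4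
          exact h4.symm
        have hdiag : ∀ y : ℝ × ℝ,
            iteratedFDeriv ℝ l (x : (ℝ × ℝ) → ℝ) x₀ (fun _ => y) = 0 := by
          intro y
          rw [hab y, ha, hb]
          ring
        exact hne (diag_zero_imp_zero hsm x₀ hdiag)
end

section
/- With the notation of the combinatorial nodal-count formula, if Γ is nonempty then b₀(Γ ∪ ∂D) - b₀(∂D) + Σ_{y ∈ ∂D ∩ Γ} ρ(y)/2 ≥ 1, and consequently the number of nodal domains satisfies μ(Γ) ≥ Σ_{x ∈ Γ ∩ D} (ν(x) - 1) + 2. -/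
open scoped Classical


private lemma mk_eq_of_preconnected' {α : Type*} [TopologicalSpace α] {s F : Set α}
    (hs : IsPreconnected s) (hsF : s ⊆ F) {x y : ↥F} (hx : ↑x ∈ s) (hy : ↑y ∈ s) :
    ConnectedComponents.mk x = ConnectedComponents.mk y := by
  have h1 : IsPreconnected (Subtype.val ⁻¹' s : Set ↥F) := by
    have hpc : PreconnectedSpace ↥s := Subtype.preconnectedSpace hs
    have himg : (Subtype.val ⁻¹' s : Set ↥F) = Set.range (Set.inclusion hsF) := by
      rw [Set.range_inclusion]; rfl
    rw [himg, ← Set.image_univ]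
    exact isPreconnected_univ.image _ (continuous_inclusion hsF).continuousOn
  have hsub := h1.subset_connectedComponent (x := x) hx
  exact ConnectedComponents.coe_eq_coe.mpr (connectedComponent_eq (hsub hy))

private lemma mk_ne_of_clopen' {α : Type*} [TopologicalSpace α] {U : Set α}
    (hU : IsClopen U) {x y : α} (hx : x ∈ U) (hy : y ∉ U) :
    ConnectedComponents.mk x ≠ ConnectedComponents.mk y := by
  intro h
  have h2 := ConnectedComponents.coe_eq_coe.mp h
  refine hy (hU.connectedComponent_subset hx ?_)
  rw [h2]; exact mem_connectedComponent

/-- The degree of a point `v` as a vertex of the embedded graph with edge arcs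
`γ i : [0,1] → ℝ²`: the number of edge-ends at `v`. -/
noncomputable def edgeDegree {m : ℕ} (γ : Fin m → ℝ → ℝ × ℝ) (v : ℝ × ℝ) : ℕ :=
  (Finset.univ.filter
    (fun q : Fin m × Bool => γ q.1 (if q.2 then 1 else 0) = v)).card

/-- For a nonempty abstract nodal set `Γ` in `D`,
`b₀(Γ ∪ ∂D) - b₀(∂D) + Σ_y ρ(y)/2 ≥ 1`, and consequently
`μ(Γ) ≥ Σ_x (ν(x) - 1) + 2` (Proposition 2.8, second part). -/
theorem nodal_euler_inequalities
    (D : Set (ℝ × ℝ)) (hDopen : IsOpen D) (hDbd : Bornology.IsBounded D)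
    (b : ℕ) (B : Fin b → Set (ℝ × ℝ)) (hBcover : frontier D = ⋃ i, B i)
    (hBconn : ∀ i, IsConnected (B i))
    (hBdisj : ∀ i j, i ≠ j → Disjoint (B i) (B j))
    (hBcirc : ∀ i, Nonempty (↥(B i) ≃ₜ ↥(Metric.sphere (0 : ℂ) 1)))
    (X : Finset (ℝ × ℝ)) (hX : ↑X ⊆ D)
    (Y : Finset (ℝ × ℝ)) (hY : ↑Y ⊆ frontier D)
    (m : ℕ) (γ : Fin m → ℝ → ℝ × ℝ)
    (hγc : ∀ i, ContinuousOn (γ i) (Set.Icc 0 1))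
    (hγi : ∀ i, Set.InjOn (γ i) (Set.Icc 0 1))
    (hγe : ∀ i, (γ i 0 ∈ X ∨ γ i 0 ∈ Y) ∧ (γ i 1 ∈ X ∨ γ i 1 ∈ Y))
    (hγint : ∀ i, γ i '' Set.Ioo 0 1 ⊆ D \ (↑X ∪ ↑Y))
    (hγdisj : ∀ i j, i ≠ j → Disjoint (γ i '' Set.Ioo 0 1) (γ j '' Set.Ioo 0 1))
    (p : ℕ) (c : Fin p → ↥(Metric.sphere (0 : ℂ) 1) → ℝ × ℝ)
    (hcc : ∀ j, Continuous (c j)) (hci : ∀ j, Function.Injective (c j))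
    (hcd : ∀ j, Set.range (c j) ⊆ D \ (↑X ∪ ↑Y ∪ ⋃ i, γ i '' Set.Icc 0 1))
    (hcdisj : ∀ j k, j ≠ k → Disjoint (Set.range (c j)) (Set.range (c k)))
    (Γ : Set (ℝ × ℝ))
    (hΓ : Γ = ↑X ∪ ↑Y ∪ (⋃ i, γ i '' Set.Icc 0 1) ∪ ⋃ j, Set.range (c j))
    (ν : ℝ × ℝ → ℕ) (hν : ∀ x ∈ X, edgeDegree γ x = 2 * ν x ∧ 1 ≤ ν x)
    (ρ : ℝ × ℝ → ℕ) (hρ : ∀ y ∈ Y, edgeDegree γ y = ρ y ∧ 1 ≤ ρ y)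
    -- each boundary component is hit an even number of times
    (heven : ∀ i : Fin b, Even (∑ y ∈ Y.filter (· ∈ B i), ρ y))
    (μ b₀N : ℕ)
    (hμ : μ = Nat.card (ConnectedComponents ↥(D \ Γ)))
    (hb₀N : b₀N = Nat.card (ConnectedComponents ↥(Γ ∪ frontier D)))

    -- the nodal set is nonempty
    (hne : Γ.Nonempty)
    -- the Euler-type identity of Proposition 2.8
    (hid : (μ : ℚ) = (b₀N : ℚ) - (b : ℚ)
      + ∑ x ∈ X, ((ν x : ℚ) - 1) + (∑ y ∈ Y, (ρ y : ℚ) / 2) + 1) :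
    (1 : ℚ) ≤ (b₀N : ℚ) - (b : ℚ) + ∑ y ∈ Y, (ρ y : ℚ) / 2 ∧
      (∑ x ∈ X, (ν x - 1)) + 2 ≤ μ := by
  classical
  set F : Set (ℝ × ℝ) := Γ ∪ frontier D with hFdef
  -- basic compactness facts
  have hsph : IsCompact (Metric.sphere (0 : ℂ) 1) := isCompact_sphere 0 1
  haveI : CompactSpace ↥(Metric.sphere (0 : ℂ) 1) := isCompact_iff_compactSpace.mp hsph
  have harc : ∀ i, IsCompact (γ i '' Set.Icc 0 1) := fun i =>
    isCompact_Icc.image_of_continuousOn (hγc i)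
  have hcirc : ∀ j, IsCompact (Set.range (c j)) := fun j => isCompact_range (hcc j)
  have hΓcpt : IsCompact Γ := by
    rw [hΓ]
    exact ((X.finite_toSet.isCompact.union Y.finite_toSet.isCompact).union
      (isCompact_iUnion harc)).union (isCompact_iUnion hcirc)
  have hBcpt : ∀ i, IsCompact (B i) := fun i => by
    haveI : CompactSpace ↥(B i) := ((hBcirc i).some.symm).compactSpace
    exact isCompact_iff_compactSpace.mpr this
  have hBsub : ∀ i, B i ⊆ frontier D := fun i => by
    rw [hBcover]; exact Set.subset_iUnion B i
  -- Γ meets the boundary only in Y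
  have hΓfr : Γ ∩ frontier D ⊆ (↑Y : Set (ℝ × ℝ)) := by
    rintro z ⟨hzΓ, hzf⟩
    have hzD : z ∉ D := by
      rw [hDopen.frontier_eq] at hzf; exact hzf.2
    rw [hΓ] at hzΓ
    rcases hzΓ with ((hz | hz) | hz) | hz
    · exact absurd (hX hz) hzD
    · exact hz
    · obtain ⟨i, hi⟩ := Set.mem_iUnion.mp hz
      obtain ⟨t, ht, rfl⟩ := hi
      by_cases ht0 : t = 0
      · subst ht0
        rcases (hγe i).1 with h | h
        · exact absurd (hX h) hzD
        · exact h
      · by_cases ht1 : t = 1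
        · subst ht1
          rcases (hγe i).2 with h | h
          · exact absurd (hX h) hzD
          · exact h
        · have hmem : γ i t ∈ γ i '' Set.Ioo 0 1 :=
            ⟨t, ⟨lt_of_le_of_ne ht.1 (Ne.symm ht0), lt_of_le_of_ne ht.2 ht1⟩, rfl⟩
          exact absurd (hγint i hmem).1 hzD
    · obtain ⟨j, hj⟩ := Set.mem_iUnion.mp hz
      exact absurd (hcd j hj).1 hzD
  -- clopen-ness of unhit boundary circles inside F
  have hclopen : ∀ i : Fin b, (∀ y ∈ Y, y ∉ B i) →
      IsClopen (Subtype.val ⁻¹' (B i) : Set ↥F) := by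
    intro i hi
    constructor
    · exact (hBcpt i).isClosed.preimage continuous_subtype_val
    · rw [← isClosed_compl_iff]
      have hcompl : (Subtype.val ⁻¹' (B i) : Set ↥F)ᶜ =
          Subtype.val ⁻¹' (Γ ∪ ⋃ j, if j = i then ∅ else B j) := by
        ext z
        simp only [Set.mem_compl_iff, Set.mem_preimage, Set.mem_union, Set.mem_iUnion]
        constructor
        · intro hz
          have hz2 : (z : ℝ × ℝ) ∈ Γ ∪ frontier D := z.2
          rcases hz2 with hzΓ | hzf
          · exact Or.inl hzΓ
          · rw [hBcover] at hzf
            obtain ⟨j, hj⟩ := Set.mem_iUnion.mp hzf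
            have hji : j ≠ i := fun h => hz (h ▸ hj)
            exact Or.inr ⟨j, by simp [hji, hj]⟩
        · rintro (hzΓ | ⟨j, hj⟩) hzB
          · have hzY : (z : ℝ × ℝ) ∈ (↑Y : Set (ℝ × ℝ)) := hΓfr ⟨hzΓ, hBsub i hzB⟩
            exact hi _ hzY hzB
          · by_cases hji : j = i
            · simp [hji] at hj
            · simp only [if_neg hji] at hj
              exact Set.disjoint_left.mp (hBdisj j i hji) hj hzB
      rw [hcompl]
      refine IsClosed.preimage continuous_subtype_val ?_
      refine hΓcpt.isClosed.union (isClosed_iUnion_of_finite fun j => ?_)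
      by_cases hji : j = i <;> simp [hji, (hBcpt j).isClosed]
  -- finiteness of the set of connected components of F
  haveI hfin : Finite (ConnectedComponents ↥F) := by
    have hconn_sph : IsPreconnected (Metric.sphere (0 : ℂ) 1) :=
      (isConnected_sphere (by rw [Complex.rank_real_complex]; norm_num) 0
        zero_le_one).isPreconnected
    haveI : PreconnectedSpace ↥(Metric.sphere (0 : ℂ) 1) :=
      Subtype.preconnectedSpace hconn_sph
    let ι := (↥(X : Set (ℝ × ℝ))) ⊕ (↥(Y : Set (ℝ × ℝ))) ⊕ Fin m ⊕ Fin p ⊕ Fin b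
    let T : ι → Set (ℝ × ℝ) := fun i => match i with
      | Sum.inl x => {(x : ℝ × ℝ)}
      | Sum.inr (Sum.inl y) => {(y : ℝ × ℝ)}
      | Sum.inr (Sum.inr (Sum.inl i)) => γ i '' Set.Icc 0 1
      | Sum.inr (Sum.inr (Sum.inr (Sum.inl j))) => Set.range (c j)
      | Sum.inr (Sum.inr (Sum.inr (Sum.inr k))) => B k
    have hTF : ∀ i, T i ⊆ F := by
      rintro (x | y | i | j | k) z hz
      · refine Or.inl ?_
        rw [hΓ]
        rw [Set.mem_singleton_iff] at hz
        subst hz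
        exact Or.inl (Or.inl (Or.inl x.2))
      · refine Or.inl ?_
        rw [hΓ]
        rw [Set.mem_singleton_iff] at hz
        subst hz
        exact Or.inl (Or.inl (Or.inr y.2))
      · refine Or.inl ?_
        rw [hΓ]
        exact Or.inl (Or.inr (Set.mem_iUnion.mpr ⟨i, hz⟩))
      · refine Or.inl ?_
        rw [hΓ]
        exact Or.inr (Set.mem_iUnion.mpr ⟨j, hz⟩)
      · exact Or.inr (hBsub k hz)
    have hTpre : ∀ i, IsPreconnected (T i) := by
      rintro (x | y | i | j | k)
      · exact isPreconnected_singleton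
      · exact isPreconnected_singleton
      · exact isPreconnected_Icc.image _ (hγc i)
      · show IsPreconnected (Set.range (c j))
        rw [← Set.image_univ]
        exact isPreconnected_univ.image _ (hcc j).continuousOn
      · exact (hBconn k).isPreconnected
    have hTne : ∀ i, (T i).Nonempty := by
      rintro (x | y | i | j | k)
      · exact ⟨x, rfl⟩
      · exact ⟨y, rfl⟩
      · exact ⟨γ i 0, ⟨0, ⟨le_refl 0, zero_le_one⟩, rfl⟩⟩
      · exact ⟨c j ⟨1, by simp⟩, Set.mem_range_self _⟩
      · exact (hBconn k).nonempty
    have hmem : ∀ z : ↥F, ∃ i : ι, (z : ℝ × ℝ) ∈ T i := by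
      intro z
      have hz2 : (z : ℝ × ℝ) ∈ Γ ∪ frontier D := z.2
      rcases hz2 with hz | hz
      · rw [hΓ] at hz
        rcases hz with ((hz | hz) | hz) | hz
        · exact ⟨Sum.inl ⟨_, hz⟩, rfl⟩
        · exact ⟨Sum.inr (Sum.inl ⟨_, hz⟩), rfl⟩
        · obtain ⟨i, hi⟩ := Set.mem_iUnion.mp hz
          exact ⟨Sum.inr (Sum.inr (Sum.inl i)), hi⟩
        · obtain ⟨j, hj⟩ := Set.mem_iUnion.mp hz
          exact ⟨Sum.inr (Sum.inr (Sum.inr (Sum.inl j))), hj⟩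
      · rw [hBcover] at hz
        obtain ⟨k, hk⟩ := Set.mem_iUnion.mp hz
        exact ⟨Sum.inr (Sum.inr (Sum.inr (Sum.inr k))), hk⟩
    choose t ht using hTne
    refine Finite.of_surjective
      (fun i : ι => (ConnectedComponents.mk ⟨t i, hTF i (ht i)⟩ : ConnectedComponents ↥F)) ?_
    intro cc
    obtain ⟨x, rfl⟩ := ConnectedComponents.surjective_coe cc
    obtain ⟨i, hi⟩ := hmem x
    exact ⟨i, mk_eq_of_preconnected' (hTpre i) (hTF i) (ht i) hi⟩
  -- representatives
  have hptex : ∀ i : Fin b, ∃ z, z ∈ B i := fun i => (hBconn i).nonempty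
  choose pt hpt using hptex
  obtain ⟨z0, hz0⟩ := hne
  have hz0F : z0 ∈ F := Or.inl hz0
  have hptF : ∀ i, pt i ∈ F := fun i => Or.inr (hBsub i (hpt i))
  have hz0B : ∀ i : Fin b, (∀ y ∈ Y, y ∉ B i) → z0 ∉ B i := fun i hi hzB =>
    hi z0 (hΓfr ⟨hz0, hBsub i hzB⟩) hzB
  -- count of components: at least (#unhit) + 1
  have hcard : (Finset.univ.filter (fun i : Fin b => ∀ y ∈ Y, y ∉ B i)).card + 1 ≤ b₀N := by
    rw [hb₀N]
    let f2 : Option {i : Fin b // ∀ y ∈ Y, y ∉ B i} → ConnectedComponents ↥F := fun o =>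
      match o with
      | none => ConnectedComponents.mk ⟨z0, hz0F⟩
      | some ⟨i, _⟩ => ConnectedComponents.mk ⟨pt i, hptF i⟩
    have hf2 : Function.Injective f2 := by
      rintro (_ | ⟨i, hi⟩) (_ | ⟨j, hj⟩) h
      · rfl
      · exact absurd h.symm (mk_ne_of_clopen' (hclopen j hj) (hpt j) (hz0B j hj))
      · exact absurd h (mk_ne_of_clopen' (hclopen i hi) (hpt i) (hz0B i hi))
      · by_cases hij : i = j
        · subst hij; rfl
        · exact absurd h (mk_ne_of_clopen' (hclopen i hi) (hpt i)
            (fun hmm => Set.disjoint_left.mp (hBdisj j i (Ne.symm hij)) (hpt j) hmm))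
    have hle := Nat.card_le_card_of_injective f2 hf2
    rwa [Nat.card_eq_fintype_card, Fintype.card_option, Fintype.card_subtype] at hle
  -- sum of ρ over each hit circle is at least 2
  have hsum : 2 * (Finset.univ.filter (fun i : Fin b => ¬ ∀ y ∈ Y, y ∉ B i)).card
      ≤ ∑ y ∈ Y, ρ y := by
    have hg : ∀ y ∈ Y, ∃ i, y ∈ B i := by
      intro y hy
      have hyf : y ∈ frontier D := hY hy
      rw [hBcover] at hyf
      exact Set.mem_iUnion.mp hyf
    set g : ℝ × ℝ → Option (Fin b) :=
      fun y => if h : ∃ i, y ∈ B i then some h.choose else none with hgdef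
    have hgmem : ∀ y, ∀ h : ∃ i, y ∈ B i, y ∈ B (h.choose) := fun y h => h.choose_spec
    have hfilter : ∀ i : Fin b, Y.filter (fun y => g y = some i) = Y.filter (· ∈ B i) := by
      intro i
      ext y
      simp only [Finset.mem_filter, and_congr_right_iff]
      intro hy
      have h := hg y hy
      rw [hgdef]
      simp only [dif_pos h, Option.some_inj]
      constructor
      · rintro rfl; exact h.choose_spec
      · intro hyB
        by_contra hne'
        exact Set.disjoint_left.mp (hBdisj _ _ hne') h.choose_spec hyB
    have hfib : ∑ o ∈ (Finset.univ : Finset (Option (Fin b))),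
        ∑ y ∈ Y.filter (fun y => g y = o), ρ y = ∑ y ∈ Y, ρ y :=
      Finset.sum_fiberwise_of_maps_to (fun y _ => Finset.mem_univ (g y)) ρ
    rw [← hfib]
    have hsub2 : ((Finset.univ.filter (fun i : Fin b => ¬ ∀ y ∈ Y, y ∉ B i)).image some)
        ⊆ (Finset.univ : Finset (Option (Fin b))) := Finset.subset_univ _
    calc 2 * (Finset.univ.filter (fun i : Fin b => ¬ ∀ y ∈ Y, y ∉ B i)).card
        = ∑ i ∈ Finset.univ.filter (fun i : Fin b => ¬ ∀ y ∈ Y, y ∉ B i), 2 := by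
          rw [Finset.sum_const, smul_eq_mul, mul_comm]
      _ ≤ ∑ i ∈ Finset.univ.filter (fun i : Fin b => ¬ ∀ y ∈ Y, y ∉ B i),
            ∑ y ∈ Y.filter (fun y => g y = some i), ρ y := by
          refine Finset.sum_le_sum fun i hi => ?_
          rw [hfilter i]
          simp only [Finset.mem_filter, Finset.mem_univ, true_and] at hi
          push_neg at hi
          obtain ⟨y0, hy0Y, hy0B⟩ := hi
          have hy0mem : y0 ∈ Y.filter (· ∈ B i) := Finset.mem_filter.mpr ⟨hy0Y, hy0B⟩
          have h1 : 1 ≤ ∑ y ∈ Y.filter (· ∈ B i), ρ y :=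
            le_trans (hρ y0 hy0Y).2 (Finset.single_le_sum (fun _ _ => Nat.zero_le _) hy0mem)
          obtain ⟨k, hk⟩ := heven i
          omega
      _ = ∑ o ∈ (Finset.univ.filter (fun i : Fin b => ¬ ∀ y ∈ Y, y ∉ B i)).image some,
            ∑ y ∈ Y.filter (fun y => g y = o), ρ y := by
          rw [Finset.sum_image (fun a _ b _ h => Option.some_injective _ h)]
      _ ≤ ∑ o ∈ (Finset.univ : Finset (Option (Fin b))),
            ∑ y ∈ Y.filter (fun y => g y = o), ρ y :=
          Finset.sum_le_sum_of_subset hsub2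
  -- put the counting together over ℚ
  have hcards : (Finset.univ.filter (fun i : Fin b => ∀ y ∈ Y, y ∉ B i)).card
      + (Finset.univ.filter (fun i : Fin b => ¬ ∀ y ∈ Y, y ∉ B i)).card = b := by
    rw [Finset.card_filter_add_card_filter_not, Finset.card_univ, Fintype.card_fin]
  have hA : (∑ y ∈ Y, (ρ y : ℚ) / 2)
      ≥ ((Finset.univ.filter (fun i : Fin b => ¬ ∀ y ∈ Y, y ∉ B i)).card : ℚ) := by
    have h1 : (∑ y ∈ Y, (ρ y : ℚ) / 2) = ((∑ y ∈ Y, ρ y : ℕ) : ℚ) / 2 := by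
      rw [← Finset.sum_div]
      push_cast
      ring
    rw [h1]
    have h2 : ((2 * (Finset.univ.filter (fun i : Fin b => ¬ ∀ y ∈ Y, y ∉ B i)).card : ℕ) : ℚ)
        ≤ ((∑ y ∈ Y, ρ y : ℕ) : ℚ) := Nat.cast_le.mpr hsum
    push_cast at h2 ⊢
    linarith
  have goal1 : (1 : ℚ) ≤ (b₀N : ℚ) - (b : ℚ) + ∑ y ∈ Y, (ρ y : ℚ) / 2 := by
    have hc1 : ((Finset.univ.filter (fun i : Fin b => ∀ y ∈ Y, y ∉ B i)).card : ℚ) + 1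
        ≤ (b₀N : ℚ) := by exact_mod_cast hcard
    have hc2 : ((Finset.univ.filter (fun i : Fin b => ∀ y ∈ Y, y ∉ B i)).card : ℚ)
        + ((Finset.univ.filter (fun i : Fin b => ¬ ∀ y ∈ Y, y ∉ B i)).card : ℚ)
        = (b : ℚ) := by exact_mod_cast hcards
    linarith
  refine ⟨goal1, ?_⟩
  -- second inequality
  have hcast : ((∑ x ∈ X, (ν x - 1) : ℕ) : ℚ) = ∑ x ∈ X, ((ν x : ℚ) - 1) := by
    rw [Nat.cast_sum]
    exact Finset.sum_congr rfl fun x hx => by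
      rw [Nat.cast_sub (hν x hx).2, Nat.cast_one]
  have hq : ((∑ x ∈ X, (ν x - 1) : ℕ) + 2 : ℚ) ≤ (μ : ℚ) := by
    rw [hcast]
    linarith [hid, goal1]
  exact_mod_cast hq
end
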